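/- arXiv:2004.03197 — 2 statements merged into one kernel-verified Lean document; each statement's English description precedes it below -/
import Mathlib

section
/- Let x, y ∈ L¹(0,∞) with x ≺ y. Then ∫₀^∞ f(x(t)) dt ≤ ∫₀^∞ f(y(t)) dt for every convex function f : ℝ → ℝ with f(0) = 0 such that f∘x and f∘y are integrable. -/
open MeasureTheory Set

/-- Decreasing rearrangement of `|f|` with respect to Lebesgue measure on `(0,∞)`. -/
noncomputable def rearr (f : ℝ → ℝ) (t : ℝ) : ℝ :=
  sInf {s : ℝ | 0 ≤ s ∧ (volume.restrict (Set.Ioi (0:ℝ))) {x | s < |f x|} ≤ ENNReal.ofReal t}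

/-- Positive part of a function. -/
noncomputable def posPart' (f : ℝ → ℝ) : ℝ → ℝ := fun t => max (f t) 0

/-- Negative part of a function. -/
noncomputable def negPart' (f : ℝ → ℝ) : ℝ → ℝ := fun t => max (-f t) 0

/-- Hardy–Littlewood–Pólya submajorization on `(0,∞)`. -/
def SubMaj (f g : ℝ → ℝ) : Prop :=
  ∀ t : ℝ, 0 ≤ t →
    (∫ s in Set.Ioc (0:ℝ) t, rearr f s) ≤ ∫ s in Set.Ioc (0:ℝ) t, rearr g s

/-- Hardy–Littlewood–Pólya majorization on `(0,∞)`: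
`f₊ ≺≺ g₊`, `f₋ ≺≺ g₋` and `∫ f = ∫ g`. -/
def Maj (f g : ℝ → ℝ) : Prop :=
  SubMaj (posPart' f) (posPart' g) ∧ SubMaj (negPart' f) (negPart' g) ∧
    (∫ t in Set.Ioi (0:ℝ), f t) = ∫ t in Set.Ioi (0:ℝ), g t

open scoped ENNReal

/-!
Write `f v = a v + Φ₊ (v⁺) + Φ₋ (v⁻)`, where `a = f'₊(0)` and `Φ₊`, `Φ₋` are the primitives
from `0` of the nondecreasing functions `f'₊(u) - a` and `a - f'₊(-u)`, which vanish at `0`.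
As `∫ x = ∫ y`, it suffices to show `∫ Φ(z) ≤ ∫ Φ(w)` for nonnegative `z ≺≺ w` and `Φ = ∫₀ φ`
with `φ` nondecreasing and `φ 0 ≥ 0`. By the layer cake formula `∫ Φ(z) = ∫₀^∞ φ(u) d_z(u) du`,
where `d_z` is the distribution function of `z`, and slicing `φ` along its level sets (which are
half-lines up to null sets) reduces this to the tail inequalities `∫ₛ^∞ d_z ≤ ∫ₛ^∞ d_w`, `s ≥ 0`.
Finally `∫ₛ^∞ d_z = ∫ (z* - s)⁺`, and `z* > s` exactly on `(0, T)` with `T = d_z(s)`, so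
`∫ (z* - s)⁺ = ∫₀^T z* - s T ≤ ∫₀^T w* - s T ≤ ∫ (w* - s)⁺`.
-/

/-- `rearr f t` unfolds to `sInf {s | 0 ≤ s ∧ distribFun f s ≤ ENNReal.ofReal t}`. -/
noncomputable def distribFun (f : ℝ → ℝ) (s : ℝ) : ℝ≥0∞ :=
  volume.restrict (Ioi 0) {x | s < |f x|}

theorem distribFun_antitone (f : ℝ → ℝ) : Antitone (distribFun f) :=
  fun _ _ hst => measure_mono fun _ hx => hst.trans_lt hx

theorem rearr_nonneg (f : ℝ → ℝ) (t : ℝ) : 0 ≤ rearr f t :=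
  Real.sInf_nonneg fun _ hs => hs.1

theorem volume_restrict_Ioi_ofReal_lt (m : ℝ≥0∞) :
    volume.restrict (Ioi 0) {t : ℝ | ENNReal.ofReal t < m} = m := by
  rw [Measure.restrict_apply' measurableSet_Ioi]
  rcases eq_or_ne m ∞ with rfl | hm
  · simp
  · have : {t : ℝ | ENNReal.ofReal t < m} ∩ Ioi 0 = Ioo 0 m.toReal := by
      ext t
      simp only [mem_inter_iff, mem_ofPred_eq, mem_Ioi, mem_Ioo]
      exact ⟨fun ⟨h, ht⟩ => ⟨ht, (ENNReal.ofReal_lt_iff_lt_toReal ht.le hm).1 h⟩,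
        fun ⟨ht, h⟩ => ⟨(ENNReal.ofReal_lt_iff_lt_toReal ht.le hm).2 h, ht⟩⟩
    rw [this, Real.volume_Ioo, sub_zero, ENNReal.ofReal_toReal hm]

section Distribution

variable {f : ℝ → ℝ}

theorem exists_lt_distribFun_of_lt {a : ℝ≥0∞} {s : ℝ} (h : a < distribFun f s) :
    ∃ r, s < r ∧ a < distribFun f r := by
  have hU : ⋃ n : ℕ, {x | s + 1 / (n + 1) < |f x|} = {x | s < |f x|} := by
    ext x
    simp only [mem_iUnion, mem_ofPred_eq]
    refine ⟨fun ⟨n, hn⟩ => lt_of_le_of_lt (by simp; positivity) hn, fun hx => ?_⟩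
    obtain ⟨n, hn⟩ := exists_nat_one_div_lt (sub_pos.2 hx)
    exact ⟨n, by linarith⟩
  have hmono : Monotone fun n : ℕ => {x | s + 1 / ((n : ℝ) + 1) < |f x|} := by
    intro m n hmn x (hx : s + 1 / ((m : ℝ) + 1) < |f x|)
    refine lt_of_le_of_lt ?_ hx
    gcongr
  rw [distribFun, ← hU, hmono.measure_iUnion, lt_iSup_iff] at h
  obtain ⟨n, hn⟩ := h
  exact ⟨s + 1 / (n + 1), by simp; positivity, hn⟩

theorem lintegral_ofReal_max_abs_sub (hf : AEMeasurable f (volume.restrict (Ioi 0))) (s : ℝ) :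
    ∫⁻ t in Ioi 0, ENNReal.ofReal (max (|f t| - s) 0) = ∫⁻ u in Ioi s, distribFun f u := by
  rw [lintegral_eq_lintegral_meas_lt (f := fun t => max (|f t| - s) 0) _
    (ae_of_all _ fun _ => le_max_right _ _) ((hf.abs.sub_const s).max aemeasurable_const)]
  have hshift : ∀ u ∈ Ioi (0:ℝ),
      volume.restrict (Ioi 0) {t | u < max (|f t| - s) 0} = distribFun f (u + s) := by
    intro u hu
    congr 1
    ext t
    simp only [mem_ofPred_eq, lt_max_iff, (mem_Ioi.1 hu).not_gt, or_false]
    constructor <;> intro h <;> linarith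
  rw [setLIntegral_congr_fun measurableSet_Ioi hshift]
  have := (measurePreserving_add_right volume s).setLIntegral_comp_preimage_emb
    (measurableEmbedding_addRight s) (distribFun f) (Ioi s)
  rwa [preimage_add_const_Ioi, sub_self] at this

variable (hf : IntegrableOn f (Ioi 0))
include hf

theorem distribFun_lt_top {s : ℝ} (hs : 0 < s) : distribFun f s < ∞ :=
  hf.measure_norm_gt_lt_top hs

theorem exists_distribFun_le {a : ℝ≥0∞} (ha : 0 < a) : ∃ s, 0 ≤ s ∧ distribFun f s ≤ a := by
  have hlim : Filter.Tendsto (fun n : ℕ => distribFun f n) Filter.atTop (nhds 0) := by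
    have h := tendsto_measure_iInter_atTop (μ := volume.restrict (Ioi 0))
      (s := fun n : ℕ => {x | (n : ℝ) < |f x|})
      (fun n => nullMeasurableSet_lt aemeasurable_const hf.aemeasurable.abs)
      (fun m n hmn x (hx : (n : ℝ) < |f x|) => lt_of_le_of_lt (by gcongr) hx)
      ⟨1, by simpa [distribFun] using (distribFun_lt_top hf one_pos).ne⟩
    have hempty : ⋂ n : ℕ, {x | (n : ℝ) < |f x|} = ∅ :=
      eq_empty_of_forall_notMem fun x hx => by
        obtain ⟨n, hn⟩ := exists_nat_ge |f x|
        exact (mem_iInter.1 hx n).not_ge hn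
    rwa [hempty, measure_empty] at h
  obtain ⟨n, hn⟩ := (hlim.eventually (gt_mem_nhds ha)).exists
  exact ⟨n, n.cast_nonneg, hn.le⟩

theorem lt_rearr_iff {t s : ℝ} (ht : 0 < t) (hs : 0 ≤ s) :
    s < rearr f t ↔ ENNReal.ofReal t < distribFun f s := by
  obtain ⟨r₀, hr₀⟩ := exists_distribFun_le hf (ENNReal.ofReal_pos.2 ht)
  constructor
  · intro h
    by_contra! hle
    exact h.not_ge (csInf_le ⟨0, fun _ hr => hr.1⟩ ⟨hs, hle⟩)
  · intro h
    obtain ⟨r, hsr, hr⟩ := exists_lt_distribFun_of_lt h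
    refine hsr.trans_le (le_csInf ⟨r₀, hr₀⟩ fun q hq => ?_)
    by_contra! hqr
    exact (hq.2.trans_lt hr).not_ge (distribFun_antitone f hqr.le)

theorem antitoneOn_rearr : AntitoneOn (rearr f) (Ioi 0) := by
  intro t ht u _ htu
  obtain ⟨r₀, hr₀⟩ := exists_distribFun_le hf (ENNReal.ofReal_pos.2 (mem_Ioi.1 ht))
  exact csInf_le_csInf ⟨0, fun _ hr => hr.1⟩ ⟨r₀, hr₀⟩
    fun r hr => ⟨hr.1, hr.2.trans (ENNReal.ofReal_le_ofReal htu)⟩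

theorem distribFun_rearr {s : ℝ} (hs : 0 ≤ s) : distribFun (rearr f) s = distribFun f s := by
  have : {t | s < |rearr f t|} ∩ Ioi 0 = {t | ENNReal.ofReal t < distribFun f s} ∩ Ioi 0 := by
    ext t
    simp only [mem_inter_iff, mem_ofPred_eq, mem_Ioi, abs_of_nonneg (rearr_nonneg f t)]
    exact and_congr_left (lt_rearr_iff hf · hs)
  rw [distribFun, Measure.restrict_apply' measurableSet_Ioi, this,
    ← Measure.restrict_apply' measurableSet_Ioi, volume_restrict_Ioi_ofReal_lt]

theorem aemeasurable_rearr : AEMeasurable (rearr f) (volume.restrict (Ioi 0)) :=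
  aemeasurable_restrict_of_antitoneOn measurableSet_Ioi (antitoneOn_rearr hf)

theorem lintegral_ofReal_max_rearr_sub {s : ℝ} (hs : 0 ≤ s) :
    ∫⁻ t in Ioi 0, ENNReal.ofReal (max (rearr f t - s) 0) = ∫⁻ u in Ioi s, distribFun f u := by
  have h := lintegral_ofReal_max_abs_sub (aemeasurable_rearr hf) s
  simp only [abs_of_nonneg (rearr_nonneg f _)] at h
  rw [h]
  exact setLIntegral_congr_fun measurableSet_Ioi fun u hu =>
    distribFun_rearr hf (hs.trans (mem_Ioi.1 hu).le)

theorem integrableOn_rearr : IntegrableOn (rearr f) (Ioi 0) := by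
  refine ⟨(aemeasurable_rearr hf).aestronglyMeasurable,
    (hasFiniteIntegral_iff_ofReal (ae_of_all _ (rearr_nonneg f))).2 ?_⟩
  have h := lintegral_ofReal_max_rearr_sub hf le_rfl
  have h' := lintegral_ofReal_max_abs_sub hf.aemeasurable 0
  simp only [sub_zero, rearr_nonneg, abs_nonneg, max_eq_left] at h h'
  rw [h, ← h']
  exact hf.abs.lintegral_lt_top

theorem setIntegral_max_rearr_sub {s : ℝ} (hs : 0 < s) :
    ∫ t in Ioi 0, max (rearr f t - s) 0 =
      (∫ t in Ioc 0 (distribFun f s).toReal, rearr f t) - s * (distribFun f s).toReal := by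
  set T := (distribFun f s).toReal
  have hT : ∀ t ∈ Ioi (0:ℝ), max (rearr f t - s) 0 = (Iio T).indicator (rearr f · - s) t := by
    intro t ht
    have hlt : s < rearr f t ↔ t < T := (lt_rearr_iff hf ht hs.le).trans
      (ENNReal.ofReal_lt_iff_lt_toReal (mem_Ioi.1 ht).le (distribFun_lt_top hf hs).ne)
    rcases lt_or_ge s (rearr f t) with h | h
    · rw [indicator_of_mem (show t ∈ Iio T from hlt.1 h), max_eq_left (sub_nonneg.2 h.le)]
    · rw [indicator_of_notMem (show t ∉ Iio T from mt hlt.2 h.not_gt),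
        max_eq_right (sub_nonpos.2 h)]
  have hint : IntegrableOn (rearr f) (Ioo 0 T) :=
    (integrableOn_rearr hf).mono_set Ioo_subset_Ioi_self
  rw [setIntegral_congr_fun measurableSet_Ioi hT, integral_indicator measurableSet_Iio,
    Measure.restrict_restrict measurableSet_Iio, Iio_inter_Ioi, integral_Ioc_eq_integral_Ioo,
    integral_sub hint (integrableOn_const (by simp)), setIntegral_const,
    Real.volume_real_Ioo_of_le ENNReal.toReal_nonneg, sub_zero, smul_eq_mul, mul_comm]

end Distribution

theorem integrableOn_max_sub {h : ℝ → ℝ} (hh : IntegrableOn h (Ioi 0)) {s : ℝ} (hs : 0 ≤ s) :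
    IntegrableOn (fun t => max (h t - s) 0) (Ioi 0) :=
  Integrable.mono hh
    ((hh.aestronglyMeasurable.sub aestronglyMeasurable_const).sup aestronglyMeasurable_const)
    (ae_of_all _ fun t => by
      rw [Real.norm_eq_abs, Real.norm_eq_abs, abs_of_nonneg (le_max_right _ _)]
      exact max_le (by linarith [le_abs_self (h t)]) (abs_nonneg _))

theorem setIntegral_Ioc_sub_le {h : ℝ → ℝ} (hh : IntegrableOn h (Ioi 0)) {T s : ℝ} (hT : 0 ≤ T)
    (hs : 0 ≤ s) : (∫ t in Ioc 0 T, h t) - s * T ≤ ∫ t in Ioi 0, max (h t - s) 0 := by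
  have hIoc : IntegrableOn h (Ioc 0 T) := hh.mono_set Ioc_subset_Ioi_self
  have hmax := integrableOn_max_sub hh hs
  calc (∫ t in Ioc 0 T, h t) - s * T = ∫ t in Ioc 0 T, (h t - s) := by
        rw [integral_sub hIoc (integrableOn_const (by simp)), setIntegral_const,
          Real.volume_real_Ioc_of_le hT, sub_zero, smul_eq_mul, mul_comm]
    _ ≤ ∫ t in Ioc 0 T, max (h t - s) 0 :=
        integral_mono (hIoc.sub (integrableOn_const (by simp))) (hmax.mono_set Ioc_subset_Ioi_self)
          fun t => le_max_left _ _
    _ ≤ ∫ t in Ioi 0, max (h t - s) 0 :=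
        setIntegral_mono_set hmax (ae_of_all _ fun _ => le_max_right _ _)
          Ioc_subset_Ioi_self.eventuallyLE

section SubMaj

variable {f g : ℝ → ℝ} (hf : IntegrableOn f (Ioi 0)) (hg : IntegrableOn g (Ioi 0))
  (hfg : SubMaj f g)
include hf hg hfg

theorem SubMaj.lintegral_distribFun_Ioi_le_of_pos {s : ℝ} (hs : 0 < s) :
    ∫⁻ u in Ioi s, distribFun f u ≤ ∫⁻ u in Ioi s, distribFun g u := by
  rw [← lintegral_ofReal_max_rearr_sub hf hs.le, ← lintegral_ofReal_max_rearr_sub hg hs.le,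
    ← ofReal_integral_eq_lintegral_ofReal (integrableOn_max_sub (integrableOn_rearr hf) hs.le)
      (ae_of_all _ fun _ => le_max_right _ _),
    ← ofReal_integral_eq_lintegral_ofReal (integrableOn_max_sub (integrableOn_rearr hg) hs.le)
      (ae_of_all _ fun _ => le_max_right _ _),
    setIntegral_max_rearr_sub hf hs]
  exact ENNReal.ofReal_le_ofReal <| (sub_le_sub_right (hfg _ ENNReal.toReal_nonneg) _).trans
    (setIntegral_Ioc_sub_le (integrableOn_rearr hg) ENNReal.toReal_nonneg hs.le)

theorem SubMaj.lintegral_distribFun_Ioi_le {s : ℝ} (hs : 0 ≤ s) :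
    ∫⁻ u in Ioi s, distribFun f u ≤ ∫⁻ u in Ioi s, distribFun g u := by
  rcases hs.eq_or_lt with rfl | hs
  · have hU : Ioi (0:ℝ) = ⋃ n : ℕ, Ioi (1 / ((n : ℝ) + 1)) := by
      ext u
      simp only [mem_Ioi, mem_iUnion]
      exact ⟨fun hu => exists_nat_one_div_lt hu, fun ⟨n, hn⟩ => lt_trans (by positivity) hn⟩
    have hdir : Directed (· ⊆ ·) fun n : ℕ => Ioi (1 / ((n : ℝ) + 1)) :=
      Monotone.directed_le fun m n hmn => Ioi_subset_Ioi (by gcongr)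
    rw [hU, setLIntegral_iUnion_of_directed _ hdir, setLIntegral_iUnion_of_directed _ hdir]
    exact iSup_mono fun n => hfg.lintegral_distribFun_Ioi_le_of_pos hf hg (by positivity)
  · exact hfg.lintegral_distribFun_Ioi_le_of_pos hf hg hs

end SubMaj

theorem IsUpperSet.ae_eq_Ioi_sInf {S : Set ℝ} (hS : IsUpperSet S) (hne : S.Nonempty)
    (hbdd : BddBelow S) : S =ᵐ[volume] Ioi (sInf S) := by
  have hIoi : Ioi (sInf S) ⊆ S := fun u hu => by
    obtain ⟨v, hv, hvu⟩ := exists_lt_of_csInf_lt hne hu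
    exact hS hvu.le hv
  have hIci : S ⊆ Ici (sInf S) := fun u hu => csInf_le hbdd hu
  exact (hIci.eventuallyLE.trans Ioi_ae_eq_Ici.symm.le).antisymm hIoi.eventuallyLE

section Pairing

variable {F G : ℝ → ℝ≥0∞} {φ : ℝ → ℝ}

theorem setLIntegral_le_of_isUpperSet
    (hFG : ∀ s, 0 ≤ s → ∫⁻ u in Ioi s, F u ≤ ∫⁻ u in Ioi s, G u)
    {S : Set ℝ} (hS : IsUpperSet S) (hS0 : S ⊆ Ici 0) : ∫⁻ u in S, F u ≤ ∫⁻ u in S, G u := by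
  rcases S.eq_empty_or_nonempty with rfl | hne
  · simp
  have hae := hS.ae_eq_Ioi_sInf hne ⟨0, hS0⟩
  rw [setLIntegral_congr hae, setLIntegral_congr hae]
  exact hFG _ (le_csInf hne hS0)

theorem lintegral_mul_ofReal_eq (hF : Measurable F) (hφ : Monotone φ) (hφ0 : 0 ≤ φ 0) :
    ∫⁻ u in Ioi 0, F u * ENNReal.ofReal (φ u) =
      ∫⁻ c in Ioi 0, ∫⁻ u in {u | c < φ u} ∩ Ioi 0, F u := by
  set ν := (volume.restrict (Ioi (0:ℝ))).withDensity F
  have hν : ∫⁻ u, ENNReal.ofReal (φ u) ∂ν = ∫⁻ u in Ioi 0, F u * ENNReal.ofReal (φ u) :=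
    lintegral_withDensity_eq_lintegral_mul _ hF (ENNReal.measurable_ofReal.comp hφ.measurable)
  have hφν : 0 ≤ᵐ[ν] φ := (withDensity_absolutelyContinuous _ F).ae_le <|
    ae_restrict_of_forall_mem measurableSet_Ioi fun u hu => hφ0.trans (hφ (mem_Ioi.1 hu).le)
  rw [← hν, lintegral_eq_lintegral_meas_lt ν hφν hφ.measurable.aemeasurable]
  refine lintegral_congr fun c => ?_
  rw [withDensity_apply _ (measurableSet_lt measurable_const hφ.measurable),
    Measure.restrict_restrict (measurableSet_lt measurable_const hφ.measurable)]

theorem lintegral_mul_ofReal_le_of_setLIntegral_Ioi_le (hF : Measurable F) (hG : Measurable G)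
    (hFG : ∀ s, 0 ≤ s → ∫⁻ u in Ioi s, F u ≤ ∫⁻ u in Ioi s, G u)
    (hφ : Monotone φ) (hφ0 : 0 ≤ φ 0) :
    ∫⁻ u in Ioi 0, F u * ENNReal.ofReal (φ u) ≤ ∫⁻ u in Ioi 0, G u * ENNReal.ofReal (φ u) := by
  rw [lintegral_mul_ofReal_eq hF hφ hφ0, lintegral_mul_ofReal_eq hG hφ hφ0]
  refine lintegral_mono fun c => setLIntegral_le_of_isUpperSet hFG ?_
    (inter_subset_right.trans Ioi_subset_Ici_self)
  exact IsUpperSet.inter (fun _ _ hab ha => lt_of_lt_of_le ha (hφ hab)) (isUpperSet_Ioi 0)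

end Pairing

section Primitive

variable {φ : ℝ → ℝ} (hφ : Monotone φ) (hφ0 : 0 ≤ φ 0)
include hφ hφ0

theorem lintegral_ofReal_intervalIntegral_eq {z : ℝ → ℝ} (hz : IntegrableOn z (Ioi 0))
    (hz0 : ∀ t, 0 ≤ z t) :
    ∫⁻ t in Ioi 0, ENNReal.ofReal (∫ u in 0..z t, φ u) =
      ∫⁻ u in Ioi 0, distribFun z u * ENNReal.ofReal (φ u) := by
  rw [lintegral_comp_eq_lintegral_meas_lt_mul _ (ae_of_all _ hz0) hz.aemeasurable
    (fun _ _ => hφ.intervalIntegrable)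
    (ae_restrict_of_forall_mem measurableSet_Ioi fun u hu => hφ0.trans (hφ (mem_Ioi.1 hu).le))]
  simp only [distribFun, abs_of_nonneg (hz0 _)]

theorem SubMaj.lintegral_ofReal_intervalIntegral_le {z w : ℝ → ℝ}
    (hz : IntegrableOn z (Ioi 0)) (hw : IntegrableOn w (Ioi 0)) (hz0 : ∀ t, 0 ≤ z t)
    (hw0 : ∀ t, 0 ≤ w t) (hzw : SubMaj z w) :
    ∫⁻ t in Ioi 0, ENNReal.ofReal (∫ u in 0..z t, φ u) ≤
      ∫⁻ t in Ioi 0, ENNReal.ofReal (∫ u in 0..w t, φ u) := by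
  rw [lintegral_ofReal_intervalIntegral_eq hφ hφ0 hz hz0,
    lintegral_ofReal_intervalIntegral_eq hφ hφ0 hw hw0]
  exact lintegral_mul_ofReal_le_of_setLIntegral_Ioi_le (distribFun_antitone z).measurable
    (distribFun_antitone w).measurable (fun _ hs => hzw.lintegral_distribFun_Ioi_le hz hw hs) hφ hφ0

end Primitive

theorem Monotone.intervalIntegral_nonneg {g : ℝ → ℝ} (hg : Monotone g) (hg0 : 0 ≤ g 0) {v : ℝ}
    (hv : 0 ≤ v) : 0 ≤ ∫ u in 0..v, g u :=
  intervalIntegral.integral_nonneg hv fun _ hu => hg0.trans (hg hu.1)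

theorem setIntegral_comp_le_of_subMaj {P φ ψ : ℝ → ℝ} (hφ : Monotone φ) (hφ0 : 0 ≤ φ 0)
    (hψ : Monotone ψ) (hψ0 : 0 ≤ ψ 0)
    (hP : ∀ v, P v = (∫ u in 0..max v 0, φ u) + ∫ u in 0..max (-v) 0, ψ u)
    {x y : ℝ → ℝ} (hx : IntegrableOn x (Ioi 0)) (hy : IntegrableOn y (Ioi 0))
    (hpos : SubMaj (posPart' x) (posPart' y)) (hneg : SubMaj (negPart' x) (negPart' y))
    (hPy : IntegrableOn (fun t => P (y t)) (Ioi 0)) :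
    ∫ t in Ioi 0, P (x t) ≤ ∫ t in Ioi 0, P (y t) := by
  have hΦc : Continuous fun v => ∫ u in 0..v, φ u :=
    intervalIntegral.continuous_primitive (fun _ _ => hφ.intervalIntegrable) 0
  have hΨc : Continuous fun v => ∫ u in 0..v, ψ u :=
    intervalIntegral.continuous_primitive (fun _ _ => hψ.intervalIntegrable) 0
  have hΦ0 (v : ℝ) : 0 ≤ ∫ u in 0..max v 0, φ u := hφ.intervalIntegral_nonneg hφ0 (le_max_right _ _)
  have hΨ0 (v : ℝ) : 0 ≤ ∫ u in 0..max (-v) 0, ψ u :=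
    hψ.intervalIntegral_nonneg hψ0 (le_max_right _ _)
  have hPc : Continuous P := by
    rw [funext hP]
    exact (hΦc.comp (continuous_id.max continuous_const)).add
      (hΨc.comp (continuous_neg.max continuous_const))
  have hPnn (v : ℝ) : 0 ≤ P v := hP v ▸ add_nonneg (hΦ0 v) (hΨ0 v)
  have hsplit (z : ℝ → ℝ) (hz : IntegrableOn z (Ioi 0)) :
      ∫⁻ t in Ioi 0, ENNReal.ofReal (P (z t)) =
        (∫⁻ t in Ioi 0, ENNReal.ofReal (∫ u in 0..posPart' z t, φ u)) +
          ∫⁻ t in Ioi 0, ENNReal.ofReal (∫ u in 0..negPart' z t, ψ u) := by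
    have hmeas : AEMeasurable (fun t => ENNReal.ofReal (∫ u in 0..posPart' z t, φ u))
        (volume.restrict (Ioi 0)) :=
      (ENNReal.measurable_ofReal.comp hΦc.measurable).comp_aemeasurable
        (hz.aemeasurable.max aemeasurable_const)
    rw [← lintegral_add_left' hmeas]
    exact lintegral_congr fun t => by rw [hP, ENNReal.ofReal_add (hΦ0 (z t)) (hΨ0 (z t))]; rfl
  rw [integral_eq_lintegral_of_nonneg_ae (ae_of_all _ fun _ => hPnn _)
      (hPc.comp_aestronglyMeasurable hx.aestronglyMeasurable),
    integral_eq_lintegral_of_nonneg_ae (ae_of_all _ fun _ => hPnn _)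
      (hPc.comp_aestronglyMeasurable hy.aestronglyMeasurable), hsplit x hx, hsplit y hy]
  refine ENNReal.toReal_mono ?_ (add_le_add ?_ ?_)
  · rw [← hsplit y hy]
    exact hPy.lintegral_lt_top.ne
  · exact hpos.lintegral_ofReal_intervalIntegral_le hφ hφ0 hx.pos_part hy.pos_part
      (fun _ => le_max_right _ _) (fun _ => le_max_right _ _)
  · exact hneg.lintegral_ofReal_intervalIntegral_le hψ hψ0 hx.neg_part hy.neg_part
      (fun _ => le_max_right _ _) (fun _ => le_max_right _ _)

namespace ConvexOn

variable {f : ℝ → ℝ} (hf : ConvexOn ℝ univ f)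
include hf

theorem monotone_rightDeriv : Monotone fun x => derivWithin f (Ioi x) x := by
  simpa [interior_univ, monotoneOn_univ] using hf.monotoneOn_rightDeriv

theorem integral_rightDeriv (a b : ℝ) : ∫ x in a..b, derivWithin f (Ioi x) x = f b - f a := by
  wlog hab : a ≤ b generalizing a b
  · rw [intervalIntegral.integral_symm, this b a (le_of_not_ge hab)]
    ring
  exact intervalIntegral.integral_eq_sub_of_hasDeriv_right_of_le hab
    ((hf.continuousOn isOpen_univ).mono (subset_univ _))
    (fun x _ => hf.hasDerivWithinAt_rightDeriv_of_mem_interior (by simp))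
    hf.monotone_rightDeriv.intervalIntegrable

theorem sub_sub_mul_rightDeriv_eq (v : ℝ) :
    f v - f 0 - derivWithin f (Ioi 0) 0 * v =
      (∫ u in 0..max v 0, (derivWithin f (Ioi u) u - derivWithin f (Ioi 0) 0)) +
        ∫ u in 0..max (-v) 0, (derivWithin f (Ioi 0) 0 - derivWithin f (Ioi (-u)) (-u)) := by
  rcases le_total 0 v with hv | hv
  · rw [max_eq_left hv, max_eq_right (neg_nonpos.2 hv), intervalIntegral.integral_same, add_zero,
      intervalIntegral.integral_sub hf.monotone_rightDeriv.intervalIntegrable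
        intervalIntegrable_const, hf.integral_rightDeriv, intervalIntegral.integral_const,
      smul_eq_mul]
    ring
  · rw [max_eq_right hv, max_eq_left (neg_nonneg.2 hv), intervalIntegral.integral_same, zero_add,
      intervalIntegral.integral_sub intervalIntegrable_const
        (show Antitone fun u => derivWithin f (Ioi (-u)) (-u) from
          fun _ _ h => hf.monotone_rightDeriv (neg_le_neg h)).intervalIntegrable,
      intervalIntegral.integral_comp_neg (fun x => derivWithin f (Ioi x) x), neg_neg, neg_zero,
      hf.integral_rightDeriv, intervalIntegral.integral_const, smul_eq_mul]
    ring

end ConvexOn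

/-- If `x ≺ y` in `L¹(0,∞)`, then `∫ f∘x ≤ ∫ f∘y` for every convex `f : ℝ → ℝ` with
`f(0) = 0` such that `f∘x` and `f∘y` are integrable. -/
theorem stmt8 (x y : ℝ → ℝ) (hx : IntegrableOn x (Set.Ioi 0))
    (hy : IntegrableOn y (Set.Ioi 0)) (hmaj : Maj x y)
    (f : ℝ → ℝ) (hconv : ConvexOn ℝ Set.univ f) (hf0 : f 0 = 0)
    (hfx : IntegrableOn (fun t => f (x t)) (Set.Ioi 0))
    (hfy : IntegrableOn (fun t => f (y t)) (Set.Ioi 0)) :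
    (∫ t in Set.Ioi (0:ℝ), f (x t)) ≤ ∫ t in Set.Ioi (0:ℝ), f (y t) := by
  obtain ⟨hpos, hneg, hxy⟩ := hmaj
  set a := derivWithin f (Ioi 0) 0
  have hP : ∫ t in Ioi 0, (f (x t) - a * x t) ≤ ∫ t in Ioi 0, (f (y t) - a * y t) :=
    setIntegral_comp_le_of_subMaj (φ := fun u => derivWithin f (Ioi u) u - a)
      (ψ := fun u => a - derivWithin f (Ioi (-u)) (-u))
      (fun _ _ h => sub_le_sub_right (hconv.monotone_rightDeriv h) _) (sub_self a).ge
      (fun _ _ h => sub_le_sub_left (hconv.monotone_rightDeriv (neg_le_neg h)) _)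
      (by simp only [neg_zero]; exact (sub_self a).ge)
      (fun v => by simpa [hf0] using hconv.sub_sub_mul_rightDeriv_eq v)
      hx hy hpos hneg (hfy.sub (hy.const_mul a))
  rwa [integral_sub hfx (hx.const_mul a), integral_sub hfy (hy.const_mul a), integral_const_mul,
    integral_const_mul, hxy, sub_le_sub_iff_right] at hP
end

section
/- Let w₁ < w₂ < w₃ < ... be strictly increasing positive weights and consider ℓ∞ with the weighted trace τ(a) = ∑ₙ aₙ wₙ. Define y = (0, 1/w₂, 1/(2w₃), ..., 1/(2^{n-2} wₙ), ...). Then there is no infinite matrix (a_{k,n}) with nonnegative entries satisfying ∑_k a_{k,n} w_k = wₙ for every n and ∑_n a_{k,n} ≤ 1 for every k, such that ∑_n a_{k,n} yₙ = x_k for all k, where x is defined by x₁ = 1/w₂ and x_k = ( (1/(2^{k-2} w_k))(w_k - w₁) + w₁/(2^{k-1} w_{k+1}) ) / w_k for k ≥ 2. -/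
/-!
`x k = ((w k - w 0) y k + w 0 y (k + 1)) / w k` is a convex combination of two consecutive
entries of `y`, which is strictly decreasing after its zero first entry. A row with nonnegative
entries of total mass at most one can produce it only by putting mass `(w k - w 0) / w k` on
column `k` and `w 0 / w k` on column `k + 1`, provided columns `1, …, k - 1` are already used up
by the earlier rows and column `k` has room for at most `w k - w 0`. By strong induction the
matrix is therefore a weighted shift; its column `0` vanishes, contradicting trace preservation
`∑ₖ a k 0 w k = w 0`.
-/

-- Indices start at `0`: `w 0`, `ySeq w 0`, `a 0 0` are the paper's `w₁`, `y₁`, `a₁₁`.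
noncomputable def ySeq (w : ℕ → ℝ) (n : ℕ) : ℝ :=
  if n = 0 then 0 else 1 / ((2:ℝ) ^ (n - 1) * w n)

noncomputable def xSeq (w : ℕ → ℝ) (k : ℕ) : ℝ :=
  if k = 0 then 1 / w 1
  else ((1 / ((2:ℝ) ^ (k - 1) * w k)) * (w k - w 0) + w 0 / ((2:ℝ) ^ k * w (k + 1))) / w k

def IsShiftRow (w b : ℕ → ℝ) (k : ℕ) : Prop :=
  b k * w k = w k - w 0 ∧ b (k + 1) * w k = w 0 ∧ ∀ n, n ≠ k → n ≠ k + 1 → b n = 0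

section Summation

variable {ι : Type*} {b f : ι → ℝ} {s t c : ℝ}

theorem mul_le_mul_const_of_support (hb : ∀ i, 0 ≤ b i) (hfc : ∀ i, b i ≠ 0 → f i ≤ c) (i : ι) :
    b i * f i ≤ b i * c := by
  by_cases h : b i = 0
  · simp [h]
  · exact mul_le_mul_of_nonneg_left (hfc i h) (hb i)

theorem le_mul_of_hasSum_mul (hb : ∀ i, 0 ≤ b i) (hfc : ∀ i, b i ≠ 0 → f i ≤ c)
    (hs : HasSum b s) (ht : HasSum (fun i => b i * f i) t) : t ≤ s * c :=
  hasSum_le (mul_le_mul_const_of_support hb hfc) ht (hs.mul_right c)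

theorem eq_of_hasSum_mul_eq (hb : ∀ i, 0 ≤ b i) (hfc : ∀ i, b i ≠ 0 → f i ≤ c)
    (hs : HasSum b s) (ht : HasSum (fun i => b i * f i) (s * c)) {i : ι} (hi : b i ≠ 0) :
    f i = c := by
  by_contra hne
  have hlt : b i * f i < b i * c :=
    mul_lt_mul_of_pos_left ((hfc i hi).lt_of_ne hne) ((hb i).lt_of_ne' hi)
  exact (hasSum_lt (mul_le_mul_const_of_support hb hfc) hlt ht (hs.mul_right c)).false

theorem add_le_of_hasSum (hb : ∀ i, 0 ≤ b i) (hs : HasSum b s) {i j : ι} (hij : i ≠ j) :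
    b i + b j ≤ s := by
  classical
  simpa [Finset.sum_pair hij] using sum_le_hasSum {i, j} (fun l _ => hb l) hs

theorem eq_zero_of_hasSum_of_add_eq (hb : ∀ i, 0 ≤ b i) (hs : HasSum b s) {i j k : ι}
    (hij : i ≠ j) (hki : k ≠ i) (hkj : k ≠ j) (hsum : b i + b j = s) : b k = 0 := by
  classical
  have h := sum_le_hasSum {i, j, k} (fun l _ => hb l) hs
  rw [Finset.sum_insert (by simp [hij, hki.symm]), Finset.sum_pair hkj.symm] at h
  linarith [hb k]

end Summation

section Sequences

variable {w : ℕ → ℝ}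

@[simp]
theorem ySeq_zero (w : ℕ → ℝ) : ySeq w 0 = 0 := rfl

theorem ySeq_succ (w : ℕ → ℝ) (n : ℕ) : ySeq w (n + 1) = 1 / ((2:ℝ) ^ n * w (n + 1)) := by
  simp [ySeq]

theorem ySeq_pos (hpos : ∀ n, 0 < w n) {n : ℕ} (hn : n ≠ 0) : 0 < ySeq w n := by
  obtain ⟨m, rfl⟩ := Nat.exists_eq_succ_of_ne_zero hn
  have := hpos (m + 1)
  rw [ySeq_succ]
  positivity

theorem ySeq_lt_ySeq (hpos : ∀ n, 0 < w n) (hmono : StrictMono w) {m n : ℕ} (hm : m ≠ 0)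
    (hmn : m < n) : ySeq w n < ySeq w m := by
  obtain ⟨m, rfl⟩ := Nat.exists_eq_succ_of_ne_zero hm
  obtain ⟨n, rfl⟩ : ∃ n', n = n' + 1 := ⟨n - 1, by omega⟩
  have := hpos (m + 1)
  rw [ySeq_succ, ySeq_succ]
  gcongr
  · norm_num
  · omega
  · exact hmono hmn

theorem ySeq_lt_ySeq_succ (hpos : ∀ n, 0 < w n) (hmono : StrictMono w) {k n : ℕ}
    (hn : n = 0 ∨ k + 1 < n) : ySeq w n < ySeq w (k + 1) := by
  rcases hn with rfl | hn
  · exact ySeq_pos hpos k.succ_ne_zero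
  · exact ySeq_lt_ySeq hpos hmono k.succ_ne_zero hn

theorem xSeq_mul (hpos : ∀ n, 0 < w n) (k : ℕ) :
    xSeq w k * w k = (w k - w 0) * ySeq w k + w 0 * ySeq w (k + 1) := by
  rcases k with _ | k
  · simp [xSeq, ySeq_succ, mul_comm]
  · have := (hpos (k + 1)).ne'
    have := (hpos (k + 2)).ne'
    simp only [xSeq, ySeq_succ, Nat.succ_ne_zero, if_false, Nat.add_sub_cancel]
    field_simp

end Sequences

section Rows

variable {w : ℕ → ℝ}

theorem masses_eq_of_xSeq_sub_le (hpos : ∀ n, 0 < w n) (hmono : StrictMono w) {k : ℕ} {p s : ℝ}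
    (hp : 0 ≤ p) (hs : s ≤ 1) (hdiag : 0 < k → p * w k ≤ w k - w 0)
    (hoff : xSeq w k - p * ySeq w k ≤ (s - p) * ySeq w (k + 1)) :
    p * w k = w k - w 0 ∧ (s - p) * w k = w 0 := by
  have hwk := hpos k
  have hyk1 : 0 < ySeq w (k + 1) := ySeq_pos hpos k.succ_ne_zero
  have hx := xSeq_mul hpos k
  have hmass : (s - p) * ySeq w (k + 1) ≤ (1 - p) * ySeq w (k + 1) := by gcongr
  have hdiag_eq : p * w k = w k - w 0 := by
    have key : 0 ≤ (p * w k - (w k - w 0)) * (ySeq w k - ySeq w (k + 1)) := by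
      nlinarith [mul_le_mul_of_nonneg_left (hoff.trans hmass) hwk.le]
    rcases Nat.eq_zero_or_pos k with rfl | hk
    · have : p * w 0 ≤ 0 := by simpa using nonpos_of_mul_nonneg_left key (by simpa using hyk1)
      linarith [mul_nonneg hp hwk.le]
    · have hyk := ySeq_lt_ySeq hpos hmono hk.ne' k.lt_succ_self
      linarith [hdiag hk, nonneg_of_mul_nonneg_left key (sub_pos.2 hyk)]
  have hoff_eq : (xSeq w k - p * ySeq w k) * w k = w 0 * ySeq w (k + 1) := by
    linear_combination hx - ySeq w k * hdiag_eq
  refine ⟨hdiag_eq, le_antisymm (by nlinarith) (le_of_mul_le_mul_right ?_ hyk1)⟩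
  nlinarith [mul_le_mul_of_nonneg_right hoff hwk.le]

theorem isShiftRow_of_hasSum (hpos : ∀ n, 0 < w n) (hmono : StrictMono w) {b : ℕ → ℝ} {k : ℕ}
    (hb : ∀ n, 0 ≤ b n) (hbs : Summable b) (hb1 : ∑' n, b n ≤ 1)
    (hbx : HasSum (fun n => b n * ySeq w n) (xSeq w k))
    (hlow : ∀ n, 0 < n → n < k → b n = 0) (hdiag : 0 < k → b k * w k ≤ w k - w 0) :
    IsShiftRow w b k := by
  classical
  set r := Function.update b k 0
  have hr : ∀ n, 0 ≤ r n := fun n => by by_cases h : n = k <;> simp [r, h, hb n]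
  have hrs : HasSum r (∑' n, b n - b k) := by
    simpa [r, sub_eq_neg_add] using hbs.hasSum.update k 0
  have hry : HasSum (fun n => r n * ySeq w n) (xSeq w k - b k * ySeq w k) := by
    have hfun : (fun n => r n * ySeq w n) = Function.update (fun n => b n * ySeq w n) k 0 := by
      ext n; by_cases h : n = k <;> simp [r, h]
    rw [hfun]
    simpa [sub_eq_neg_add] using hbx.update k 0
  have hsupp : ∀ n, r n ≠ 0 → n ≠ k + 1 → ySeq w n < ySeq w (k + 1) := fun n hn hn1 => by
    have hnk : n ≠ k := by rintro rfl; simp [r] at hn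
    have hbn : b n ≠ 0 := by simpa [r, hnk] using hn
    exact ySeq_lt_ySeq_succ hpos hmono (by by_contra! h; exact hbn (hlow n (by omega) (by omega)))
  have hceil : ∀ n, r n ≠ 0 → ySeq w n ≤ ySeq w (k + 1) := fun n hn => by
    rcases eq_or_ne n (k + 1) with rfl | hn1
    · rfl
    · exact (hsupp n hn hn1).le
  obtain ⟨hdiag_eq, hrest⟩ := masses_eq_of_xSeq_sub_le hpos hmono (hb k) hb1 hdiag
    (le_mul_of_hasSum_mul hr hceil hrs hry)
  have hry' : HasSum (fun n => r n * ySeq w n) ((∑' n, b n - b k) * ySeq w (k + 1)) := by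
    convert hry using 1
    apply mul_right_cancel₀ (hpos k).ne'
    linear_combination ySeq w (k + 1) * hrest + ySeq w k * hdiag_eq - xSeq_mul hpos k
  have hr_single : ∀ n, n ≠ k + 1 → r n = 0 := fun n hn1 => by
    by_contra hn
    exact (hsupp n hn hn1).ne (eq_of_hasSum_mul_eq hr hceil hrs hry' hn)
  have hsucc : ∑' n, b n - b k = b (k + 1) := by
    simpa [r] using hrs.unique (hasSum_single (k + 1) hr_single)
  refine ⟨hdiag_eq, hsucc ▸ hrest, fun n hnk hn1 => ?_⟩
  simpa [r, hnk] using hr_single n hn1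

theorem isShiftRow_of_forall_hasSum (hpos : ∀ n, 0 < w n) (hmono : StrictMono w)
    {a : ℕ → ℕ → ℝ} (ha : ∀ k n, 0 ≤ a k n) (hcol : ∀ n, HasSum (fun k => a k n * w k) (w n))
    (hrow : ∀ k, Summable (a k)) (hrow1 : ∀ k, ∑' n, a k n ≤ 1)
    (hx : ∀ k, HasSum (fun n => a k n * ySeq w n) (xSeq w k)) (k : ℕ) :
    IsShiftRow w (a k) k := by
  induction k using Nat.strong_induction_on with
  | _ k ih =>
  have hcol_nonneg : ∀ n j, 0 ≤ a j n * w j := fun n j => mul_nonneg (ha j n) (hpos j).le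
  refine isShiftRow_of_hasSum hpos hmono (ha k) (hrow k) (hrow1 k) (hx k) ?_ ?_
  · intro n hn hnk
    obtain ⟨m, rfl⟩ := Nat.exists_eq_succ_of_ne_zero hn.ne'
    -- column `m + 1` is already filled up by rows `m` and `m + 1`
    have h := eq_zero_of_hasSum_of_add_eq (hcol_nonneg (m + 1)) (hcol (m + 1)) (i := m)
      (j := m + 1) (k := k) (by omega) (by omega) (by omega)
      (by linarith [(ih m (by omega)).2.1, (ih (m + 1) hnk).1])
    exact (mul_eq_zero.mp h).resolve_right (hpos k).ne'
  · intro hk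
    obtain ⟨m, rfl⟩ := Nat.exists_eq_succ_of_ne_zero hk.ne'
    linarith [(ih m (by omega)).2.1,
      add_le_of_hasSum (hcol_nonneg (m + 1)) (hcol (m + 1)) (i := m) (j := m + 1) (by omega)]

end Rows

/-- Weighted `ℓ∞` version: with strictly increasing positive weights `w` (0-indexed;
`w 0 = w₁`, etc.), `y = (0, 1/w₂, 1/(2w₃), …)` and `x` as in the paper, there is no
nonnegative matrix `(a k n)` with weighted column sums `∑_k a k n · w k = w n`
(trace preservation) and row sums `≤ 1` mapping `y` to `x`. -/
theorem stmt17 (w : ℕ → ℝ) (hpos : ∀ n, 0 < w n) (hmono : StrictMono w) :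
    ¬ ∃ a : ℕ → ℕ → ℝ,
      (∀ k n, 0 ≤ a k n) ∧
      (∀ n, HasSum (fun k => a k n * w k) (w n)) ∧
      (∀ k, Summable (fun n => a k n)) ∧
      (∀ k, ∑' n, a k n ≤ 1) ∧
      (∀ k, HasSum
        (fun n => a k n * (if n = 0 then 0 else 1 / ((2:ℝ) ^ (n - 1) * w n)))
        (if k = 0 then 1 / w 1
         else ((1 / ((2:ℝ) ^ (k - 1) * w k)) * (w k - w 0) +
            w 0 / ((2:ℝ) ^ k * w (k + 1))) / w k)) := by
  rintro ⟨a, ha, hcol, hrow, hrow1, hx⟩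
  have hshift := isShiftRow_of_forall_hasSum hpos hmono ha hcol hrow hrow1 hx
  have hcol0 : HasSum (fun k => a k 0 * w k) 0 := by
    convert hasSum_zero with k
    rcases k with _ | k
    · exact (hshift 0).1.trans (sub_self _)
    · simp [(hshift (k + 1)).2.2 0 (by omega) (by omega)]
  exact (hpos 0).ne' ((hcol 0).unique hcol0)
end
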